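/- For the dynamic makespan scheduling problem on two machines in the adversary model with processing times p_i ∈ [L, U] and R = U/L, if the current solution has discrepancy at most U and the adversary then changes the processing time of one job (to a new value in [L, U]), both RLS and the (1+1) EA recover a solution with discrepancy at most U in expected time O(min{R, n}). -/

import Mathlib

open scoped ENNReal
open Classical

noncomputable section

/-- Probability that the Markov chain with transition kernel `K`, started at `x`,
has not visited the target set `A` during the time steps `0, 1, …, t`. -/
def survive {S : Type*} (K : S → S → ℝ≥0∞) (A : S → Prop) : ℕ → S → ℝ≥0∞
  | 0, x => if A x then 0 else 1
  | t + 1, x => if A x then 0 else ∑' y, K x y * survive K A t y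

/-- Expected hitting time of the set `A` for the Markov chain with kernel `K` started at `x`,
computed as `∑_{t ≥ 0} Pr(T > t)`. -/
def hitTime {S : Type*} (K : S → S → ℝ≥0∞) (A : S → Prop) (x : S) : ℝ≥0∞ :=
  ∑' t, survive K A t x

/-- One step of a (1+1)-type algorithm: an offspring `z` is sampled from the mutation
distribution `pm x ·`; it replaces `x` iff `accept x z` holds. -/
def eaKernel {S : Type*} (pm : S → S → ℝ≥0∞) (accept : S → S → Prop) (x y : S) : ℝ≥0∞ :=
  ∑' z, if (if accept x z then z else x) = y then pm x z else 0

/-- The number of one-bits of a bit string. -/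
def ones {n : ℕ} (x : Fin n → Bool) : ℕ := (Finset.univ.filter fun i => x i = true).card

/-- Standard bit mutation: each of the `n` bits is flipped independently with probability `1/n`. -/
def pmutEA (n : ℕ) (x y : Fin n → Bool) : ℝ≥0∞ :=
  ((n : ℝ≥0∞)⁻¹) ^ hammingDist x y * (1 - (n : ℝ≥0∞)⁻¹) ^ (n - hammingDist x y)

/-- RLS mutation: exactly one bit, chosen uniformly at random, is flipped. -/
def pmutRLS (n : ℕ) (x y : Fin n → Bool) : ℝ≥0∞ :=
  if hammingDist x y = 1 then (n : ℝ≥0∞)⁻¹ else 0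

/-- Survival probability for a time-inhomogeneous Markov chain: `surviveT K A t s x` is the
probability that the chain with time-dependent kernel `K`, being in state `x` at time `s`,
does not visit the time-dependent target `A` during the time steps `s, s+1, …, s+t`. -/
def surviveT {S : Type*} (K : ℕ → S → S → ℝ≥0∞) (A : ℕ → S → Prop) :
    ℕ → ℕ → S → ℝ≥0∞
  | 0, s, x => if A s x then 0 else 1
  | t + 1, s, x => if A s x then 0 else ∑' y, K s x y * surviveT K A t (s + 1) y

/-- Expected hitting time of the time-dependent target `A` for the time-inhomogeneous Markov
chain with kernel `K` started at `x` at time `0`. -/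
def hitTimeT {S : Type*} (K : ℕ → S → S → ℝ≥0∞) (A : ℕ → S → Prop) (x : S) : ℝ≥0∞ :=
  ∑' t, surviveT K A t 0 x

/-- The load of machine `M₂` (the jobs `i` with `x i = true`). -/
def load {n : ℕ} (p : Fin n → ℝ) (x : Fin n → Bool) : ℝ := ∑ i, if x i then p i else 0

/-- The load of machine `M₁` (the jobs `i` with `x i = false`). -/
def loadC {n : ℕ} (p : Fin n → ℝ) (x : Fin n → Bool) : ℝ := ∑ i, if x i then 0 else p i

/-- The makespan of the schedule `x` for processing times `p`. -/
def mkspan {n : ℕ} (p : Fin n → ℝ) (x : Fin n → Bool) : ℝ := max (load p x) (loadC p x)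

/-- The discrepancy of the schedule `x` for processing times `p`. -/
def disc {n : ℕ} (p : Fin n → ℝ) (x : Fin n → Bool) : ℝ := |load p x - loadC p x|

/-- Joint kernel of an algorithm with mutation operator `pm` minimizing the makespan, together
with an adaptive adversary `σ` that in each iteration replaces the current processing times
(depending on the time and the current state) before the offspring is evaluated. -/
def advKernel (n : ℕ) (σ : ℕ → (Fin n → ℝ) → (Fin n → Bool) → Fin n → ℝ)
    (pm : (Fin n → Bool) → (Fin n → Bool) → ℝ≥0∞) (t : ℕ)
    (s s' : (Fin n → ℝ) × (Fin n → Bool)) : ℝ≥0∞ :=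
  (if s'.1 = σ t s.1 s.2 then 1 else 0) *
    eaKernel pm (fun x z => mkspan s'.1 z ≤ mkspan s'.1 x) s.2 s'.2

/-- The adversary keeps all processing times in `[L, U]` and changes the processing time of at
most one job in each iteration. -/
def ValidAdversary (n : ℕ) (L U : ℝ) (σ : ℕ → (Fin n → ℝ) → (Fin n → Bool) → Fin n → ℝ) :
    Prop :=
  ∀ t (p : Fin n → ℝ) (x : Fin n → Bool),
    (∀ i, L ≤ σ t p x i ∧ σ t p x i ≤ U) ∧
      (Finset.univ.filter fun i => σ t p x i ≠ p i).card ≤ 1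

/-!
After the change the discrepancy is at most `2U - L`. Minimizing the makespan is minimizing the
discrepancy `d`, so the potential `V(d) = U + d` for `d > U` (and `V(d) = 0` otherwise) never
increases. Moving a job `i` off the fuller machine is always accepted and lowers `V` by at least
`2 pᵢ`: by exactly `2 pᵢ` if the discrepancy stays above `U`, and by `V(d) > 2U` otherwise. Both
operators make such a move with probability at least `1/(3n)`, and the fuller machine carries
load at least `max(U, nL/2)`, so the expected drop of `V` is at least `max(2U, nL)/(3n)`.
Additive drift bounds the expected time by `3U · 3n / max(2U, nL) ≤ 9 min(R, n)`.
-/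

open Finset

section HittingTime

variable {S : Type*} (K : S → S → ℝ≥0∞) (A : S → Prop)

lemma survive_of_mem {x : S} (hx : A x) (t : ℕ) : survive K A t x = 0 := by
  cases t <;> simp [survive, hx]

theorem hitTime_le_of_drift (β : S → ℝ≥0∞)
    (hβ : ∀ x, ¬ A x → 1 + ∑' y, K x y * β y ≤ β x) (x : S) : hitTime K A x ≤ β x := by
  have hpartial : ∀ t x, ∑ s ∈ range t, survive K A s x ≤ β x := by
    intro t
    induction t with
    | zero => simp
    | succ t ih =>
      intro x
      by_cases hx : A x
      · simp [survive_of_mem K A hx]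
      calc ∑ s ∈ range (t + 1), survive K A s x
          = 1 + ∑' y, K x y * ∑ s ∈ range t, survive K A s y := by
            rw [sum_range_succ', add_comm]
            simp only [survive, hx, if_false, mul_sum]
            rw [← Summable.tsum_finsetSum fun _ _ => ENNReal.summable]
        _ ≤ 1 + ∑' y, K x y * β y := by gcongr with y; exact ih y
        _ ≤ β x := hβ x hx
  rw [hitTime, ENNReal.tsum_eq_iSup_nat]
  exact iSup_le fun t => hpartial t x

end HittingTime

section EAKernel

variable {S : Type*} (pm : S → S → ℝ≥0∞)

lemma tsum_eaKernel_mul (acc : S → S → Prop) (x : S) (β : S → ℝ≥0∞) :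
    ∑' y, eaKernel pm acc x y * β y = ∑' z, pm x z * β (if acc x z then z else x) := by
  simp_rw [eaKernel, ← ENNReal.tsum_mul_right, ite_mul, zero_mul]
  rw [ENNReal.tsum_comm]
  exact tsum_congr fun z => tsum_ite_eq' _ _

lemma one_add_tsum_eaKernel_mul_le {f : S → ℝ} {φ : ℝ → ℝ≥0∞} (hφ : Monotone φ) {x : S}
    (hpm : ∑' z, pm x z ≤ 1) (hdrift : 1 ≤ ∑' z, pm x z * (φ (f x) - φ (f z))) :
    1 + ∑' y, eaKernel pm (fun x z => f z ≤ f x) x y * φ (f y) ≤ φ (f x) := by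
  set b : S → ℝ≥0∞ := fun z => φ (f (if f z ≤ f x then z else x))
  have hb : ∀ z, b z ≤ φ (f x) := by
    intro z
    dsimp only [b]
    split_ifs with h
    exacts [hφ h, le_rfl]
  -- a rejected offspring is no better than `x`, so its drop `φ (f x) - φ (f z)` vanishes
  have hb' : ∀ z, b z ≤ φ (f z) := by
    intro z
    dsimp only [b]
    split_ifs with h
    exacts [le_rfl, hφ (le_of_not_ge h)]
  rw [tsum_eaKernel_mul]
  calc 1 + ∑' z, pm x z * b z
      ≤ ∑' z, pm x z * (φ (f x) - b z) + ∑' z, pm x z * b z := by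
        gcongr
        exact hdrift.trans (ENNReal.tsum_le_tsum fun z => by gcongr; exact hb' z)
    _ = (∑' z, pm x z) * φ (f x) := by
        rw [← ENNReal.tsum_add, ← ENNReal.tsum_mul_right]
        congr with z
        rw [← mul_add, tsub_add_cancel_of_le (hb z)]
    _ ≤ φ (f x) := mul_le_of_le_one_left' hpm

end EAKernel

section Mutation

lemma hammingDist_update_of_ne {ι : Type*} [Fintype ι] [DecidableEq ι] {β : ι → Type*}
    [∀ i, DecidableEq (β i)] (x : ∀ i, β i) {i : ι} {b : β i} (h : b ≠ x i) :
    hammingDist x (Function.update x i b) = 1 := by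
  rw [hammingDist, card_eq_one]
  refine ⟨i, eq_singleton_iff_unique_mem.mpr ⟨by simpa using h.symm, fun j hj => ?_⟩⟩
  by_contra hji
  simp [Function.update_of_ne hji] at hj

variable {n : ℕ}

lemma exists_eq_update_not_of_hammingDist_eq_one {x z : Fin n → Bool}
    (h : hammingDist x z = 1) : ∃ i, z = Function.update x i (!x i) := by
  obtain ⟨i, hi⟩ := card_eq_one.mp h
  have hdiff : ∀ j, x j ≠ z j ↔ j = i := fun j => by
    simpa using congrArg (j ∈ ·) hi
  refine ⟨i, funext fun j => ?_⟩
  by_cases hji : j = i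
  · subst hji
    rw [Function.update_self]
    have := (hdiff j).mpr rfl
    revert this
    cases x j <;> cases z j <;> simp
  · rw [Function.update_of_ne hji]
    exact (not_not.mp (mt (hdiff j).mp hji)).symm

lemma update_not_injective (x : Fin n → Bool) :
    Function.Injective fun i => Function.update x i (!x i) := by
  intro i j hij
  by_contra hne
  have := congrFun hij i
  simp [Function.update_of_ne hne] at this

lemma tsum_pmutRLS_le_one (x : Fin n → Bool) : ∑' z, pmutRLS n x z ≤ 1 := by
  have hcard : #{z | hammingDist x z = 1} ≤ n := by
    calc #{z | hammingDist x z = 1}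
        ≤ #(univ.image fun i => Function.update x i (!x i)) := by
          refine card_le_card fun z hz => ?_
          obtain ⟨i, rfl⟩ := exists_eq_update_not_of_hammingDist_eq_one (mem_filter.mp hz).2
          exact mem_image_of_mem _ (mem_univ i)
      _ ≤ n := card_image_le.trans (by simp)
  rw [tsum_fintype]
  simp only [pmutRLS]
  rw [← sum_filter, sum_const, nsmul_eq_mul]
  calc (#{z | hammingDist x z = 1} : ℝ≥0∞) * (n : ℝ≥0∞)⁻¹ ≤ n * (n : ℝ≥0∞)⁻¹ := by
        gcongr
    _ ≤ 1 := ENNReal.mul_inv_le_one _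

lemma pmutEA_eq_prod (x z : Fin n → Bool) :
    pmutEA n x z = ∏ i, if z i = x i then 1 - (n : ℝ≥0∞)⁻¹ else (n : ℝ≥0∞)⁻¹ := by
  have hne : #{i | ¬z i = x i} = hammingDist x z := by
    simp only [hammingDist, ne_comm]
  have heq : #{i | z i = x i} = n - hammingDist x z := by
    have := card_filter_add_card_filter_not (s := univ) fun i => z i = x i
    simp only [card_univ, Fintype.card_fin] at this
    omega
  rw [prod_ite, prod_const, prod_const, heq, hne, pmutEA, mul_comm]

lemma tsum_pmutEA (x : Fin n → Bool) : ∑' z, pmutEA n x z = 1 := by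
  have hcoord : ∀ i : Fin n,
      ∑ b : Bool, (if b = x i then 1 - (n : ℝ≥0∞)⁻¹ else (n : ℝ≥0∞)⁻¹) = 1 := by
    intro i
    have : (n : ℝ≥0∞)⁻¹ ≤ 1 := ENNReal.inv_le_one.mpr (by exact_mod_cast i.pos)
    cases x i <;> simp [tsub_add_cancel_of_le this, add_tsub_cancel_of_le this]
  rw [tsum_fintype]
  simp_rw [pmutEA_eq_prod]
  rw [← Fintype.prod_sum fun i b => if b = x i then 1 - (n : ℝ≥0∞)⁻¹ else (n : ℝ≥0∞)⁻¹]
  simp_rw [hcoord, prod_const_one]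

lemma inv_three_le_one_sub_inv_pow (m : ℕ) : (3 : ℝ)⁻¹ ≤ (1 - ((m : ℝ) + 1)⁻¹) ^ m := by
  calc (3 : ℝ)⁻¹ ≤ (Real.exp 1)⁻¹ := inv_anti₀ (Real.exp_pos 1) Real.exp_one_lt_three.le
    _ ≤ ((1 + (m : ℝ)⁻¹) ^ m)⁻¹ := inv_anti₀ (by positivity) Real.one_add_inv_pow_le_exp
    _ = (1 - ((m : ℝ) + 1)⁻¹) ^ m := by
      rcases eq_or_ne m 0 with rfl | hm
      · simp
      · rw [← inv_pow]
        congr 1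
        field_simp
        ring

lemma ofReal_le_pmutRLS_update_not (x : Fin n → Bool) (i : Fin n) :
    ENNReal.ofReal (3 * n)⁻¹ ≤ pmutRLS n x (Function.update x i (!x i)) := by
  rw [pmutRLS, if_pos (hammingDist_update_of_ne x (Bool.not_ne_self _)), ← ENNReal.ofReal_natCast]
  refine (ENNReal.ofReal_le_ofReal ?_).trans ENNReal.ofReal_inv_le
  have : (0 : ℝ) < n := by exact_mod_cast i.pos
  exact inv_anti₀ this (by linarith)

lemma ofReal_le_pmutEA_update_not (x : Fin n → Bool) (i : Fin n) :
    ENNReal.ofReal (3 * n)⁻¹ ≤ pmutEA n x (Function.update x i (!x i)) := by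
  obtain ⟨m, rfl⟩ : ∃ m, n = m + 1 := Nat.exists_eq_add_one.mpr i.pos
  set q : ℝ := ((m : ℝ) + 1)⁻¹
  have hq : (((m + 1 : ℕ) : ℝ≥0∞))⁻¹ = ENNReal.ofReal q := by
    rw [ENNReal.ofReal_inv_of_pos (by positivity)]
    norm_cast
  have hq0 : 0 ≤ q := by positivity
  have hq1 : q ≤ 1 := inv_le_one_of_one_le₀ (by simp)
  rw [pmutEA, hammingDist_update_of_ne x (Bool.not_ne_self _), pow_one, Nat.add_sub_cancel, hq,
    ← ENNReal.ofReal_one, ← ENNReal.ofReal_sub _ hq0, ← ENNReal.ofReal_pow (by linarith),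
    ← ENNReal.ofReal_mul hq0]
  refine ENNReal.ofReal_le_ofReal ?_
  calc (3 * ((m + 1 : ℕ) : ℝ))⁻¹ = q * 3⁻¹ := by push_cast; rw [mul_inv, mul_comm]
    _ ≤ q * (1 - q) ^ m := by gcongr; exact inv_three_le_one_sub_inv_pow m

end Mutation

section Schedule

variable {n : ℕ} (p : Fin n → ℝ)

lemma load_add_loadC (x : Fin n → Bool) : load p x + loadC p x = ∑ i, p i := by
  rw [load, loadC, ← sum_add_distrib]
  exact sum_congr rfl fun i _ => by split <;> ring

lemma disc_eq (x : Fin n → Bool) : disc p x = |2 * load p x - ∑ i, p i| := by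
  rw [disc, ← load_add_loadC p x]
  ring_nf

lemma two_mul_mkspan (x : Fin n → Bool) : 2 * mkspan p x = ∑ i, p i + disc p x := by
  rw [mkspan, disc, ← load_add_loadC p x]
  rcases le_total (load p x) (loadC p x) with h | h
  · rw [max_eq_right h, abs_of_nonpos (by linarith)]; ring
  · rw [max_eq_left h, abs_of_nonneg (by linarith)]; ring

lemma mkspan_le_mkspan_iff {x z : Fin n → Bool} :
    mkspan p z ≤ mkspan p x ↔ disc p z ≤ disc p x := by
  have := two_mul_mkspan p x
  have := two_mul_mkspan p z
  constructor <;> intro h <;> linarith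

lemma disc_le_mkspan {p : Fin n → ℝ} (hp : ∀ i, 0 ≤ p i) (x : Fin n → Bool) :
    disc p x ≤ mkspan p x := by
  have : 0 ≤ load p x := sum_nonneg fun i _ => by split <;> simp [hp i]
  have : 0 ≤ loadC p x := sum_nonneg fun i _ => by split <;> simp [hp i]
  unfold disc mkspan
  exact abs_sub_le_iff.mpr ⟨by linarith [le_max_left (load p x) (loadC p x)],
    by linarith [le_max_right (load p x) (loadC p x)]⟩

lemma load_update_not (x : Fin n → Bool) (i : Fin n) :
    load p (Function.update x i (!x i)) = if x i then load p x - p i else load p x + p i := by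
  simp only [load]
  rw [Fintype.sum_eq_add_sum_compl i,
    Fintype.sum_eq_add_sum_compl i (fun j => if x j then p j else 0), Function.update_self,
    sum_congr rfl fun j hj => by rw [Function.update_of_ne (by simpa using hj)]]
  cases x i
  · simp only [Bool.not_false, ↓reduceIte, Bool.false_eq_true, zero_add]; ring
  · simp

/-- The jobs on a machine of maximal load (machine `M₁` on a tie). -/
def fuller (x : Fin n → Bool) : Finset (Fin n) := {i | x i = decide (loadC p x < load p x)}

lemma sum_fuller (x : Fin n → Bool) : ∑ i ∈ fuller p x, p i = mkspan p x := by
  rw [fuller, mkspan, sum_filter]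
  by_cases h : loadC p x < load p x
  · rw [decide_eq_true h, max_eq_left h.le, load]
  · rw [decide_eq_false h, max_eq_right (not_lt.mp h), loadC]
    exact sum_congr rfl fun j _ => by cases x j <;> rfl

lemma disc_update_not_of_mem_fuller {x : Fin n → Bool} {i : Fin n} (hi : i ∈ fuller p x) :
    disc p (Function.update x i (!x i)) = |disc p x - 2 * p i| := by
  have hS := load_add_loadC p x
  simp only [fuller, mem_filter, mem_univ, true_and] at hi
  rw [disc_eq, disc_eq, load_update_not]
  by_cases h : loadC p x < load p x
  · simp only [h, decide_true] at hi
    rw [if_pos hi, abs_of_pos (a := 2 * load p x - _) (by linarith)]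
    ring_nf
  · simp only [h, decide_false] at hi
    rw [if_neg (by simp [hi]), abs_of_nonpos (a := 2 * load p x - _) (by linarith),
      abs_sub_comm]
    ring_nf

end Schedule

section Perturbation

lemma sum_abs_sub_le_of_card_ne_le_one {ι : Type*} [Fintype ι] {p q : ι → ℝ} {c : ℝ}
    (hc : 0 ≤ c) (hpq : ∀ i, |q i - p i| ≤ c) (hcard : #{i | q i ≠ p i} ≤ 1) :
    ∑ i, |q i - p i| ≤ c := by
  rw [← sum_filter_of_ne fun i _ h => sub_ne_zero.mp (abs_ne_zero.mp h)]
  calc ∑ i with q i ≠ p i, |q i - p i| ≤ #{i | q i ≠ p i} • c :=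
        sum_le_card_nsmul _ _ _ fun i _ => hpq i
    _ ≤ 1 • c := by gcongr
    _ = c := one_smul _ _

variable {n : ℕ}

lemma load_sub_loadC (p : Fin n → ℝ) (x : Fin n → Bool) :
    load p x - loadC p x = ∑ i, if x i then p i else -p i := by
  rw [load, loadC, ← sum_sub_distrib]
  exact sum_congr rfl fun i _ => by split <;> ring

lemma abs_disc_sub_disc_le (p q : Fin n → ℝ) (x : Fin n → Bool) :
    |disc q x - disc p x| ≤ ∑ i, |q i - p i| := by
  refine (abs_abs_sub_abs_le_abs_sub _ _).trans ?_
  rw [load_sub_loadC, load_sub_loadC, ← sum_sub_distrib]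
  refine (abs_sum_le_sum_abs _ _).trans (le_of_eq (sum_congr rfl fun i _ => ?_))
  split
  · rfl
  · rw [← abs_neg]; ring_nf

end Perturbation

section Potential

/-- Zero on the target and `U + d` above it: the jump at `d = U` pays for the final step into
the target, whatever job it moves. -/
def recoveryPotential (U d : ℝ) : ℝ := if d ≤ U then 0 else U + d

variable {U : ℝ}

lemma recoveryPotential_nonneg (hU : 0 ≤ U) (d : ℝ) : 0 ≤ recoveryPotential U d := by
  unfold recoveryPotential
  split_ifs with h
  · exact le_rfl
  · linarith

lemma recoveryPotential_mono (hU : 0 ≤ U) : Monotone (recoveryPotential U) := by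
  intro a b hab
  unfold recoveryPotential
  split_ifs with ha hb
  · exact le_rfl
  · linarith
  · linarith
  · linarith

lemma recoveryPotential_le (hU : 0 ≤ U) {d : ℝ} (hd : d ≤ 2 * U) :
    recoveryPotential U d ≤ 3 * U := by
  unfold recoveryPotential
  split_ifs <;> linarith

lemma recoveryPotential_abs_sub_add_le {d q : ℝ} (hd : U < d) (hq : q ≤ U) :
    recoveryPotential U |d - 2 * q| + 2 * q ≤ recoveryPotential U d := by
  unfold recoveryPotential
  rw [if_neg (not_le.mpr hd)]
  split_ifs with h
  · linarith
  · rw [not_le] at h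
    rw [abs_of_nonneg (by cases abs_cases (d - 2 * q) <;> linarith)]
    linarith

end Potential

section Recovery

variable {n : ℕ} {p : Fin n → ℝ} {U : ℝ}

lemma one_le_tsum_mul_potential_drop (pm : (Fin n → Bool) → (Fin n → Bool) → ℝ≥0∞)
    (hU : 0 ≤ U) (hp : ∀ i, 0 ≤ p i ∧ p i ≤ U) {α : ℝ} (hα : 0 ≤ α) {x : Fin n → Bool}
    (hflip : ∀ i, ENNReal.ofReal (3 * n)⁻¹ ≤ pm x (Function.update x i (!x i)))
    (hx : U < disc p x) (hmk : 3 * n ≤ 2 * α * mkspan p x) :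
    1 ≤ ∑' z, pm x z * (ENNReal.ofReal (α * recoveryPotential U (disc p x)) -
      ENNReal.ofReal (α * recoveryPotential U (disc p z))) := by
  have hn : (0 : ℝ) < n := by
    rcases Nat.eq_zero_or_pos n with rfl | hn
    · simp only [disc, load, loadC, univ_eq_empty, sum_empty, sub_self, abs_zero] at hx
      linarith
    · exact_mod_cast hn
  have hdrop : ∀ i ∈ fuller p x, ENNReal.ofReal (2 * α * p i) ≤
      ENNReal.ofReal (α * recoveryPotential U (disc p x)) -
        ENNReal.ofReal (α * recoveryPotential U (disc p (Function.update x i (!x i)))) := by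
    intro i hi
    rw [← ENNReal.ofReal_sub _ (mul_nonneg hα (recoveryPotential_nonneg hU _)),
      disc_update_not_of_mem_fuller p hi]
    refine ENNReal.ofReal_le_ofReal ?_
    have := recoveryPotential_abs_sub_add_le hx (hp i).2
    nlinarith
  calc (1 : ℝ≥0∞)
      ≤ ENNReal.ofReal ((3 * n : ℝ)⁻¹ * (2 * α * mkspan p x)) := by
        rw [← ENNReal.ofReal_one]
        exact ENNReal.ofReal_le_ofReal ((one_le_inv_mul₀ (by positivity)).mpr hmk)
    _ = ∑ i ∈ fuller p x, ENNReal.ofReal (3 * n)⁻¹ * ENNReal.ofReal (2 * α * p i) := by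
        rw [← sum_fuller, mul_sum, mul_sum, ENNReal.ofReal_sum_of_nonneg]
        · exact sum_congr rfl fun i _ => ENNReal.ofReal_mul (by positivity)
        · exact fun i _ => mul_nonneg (by positivity) (mul_nonneg (by positivity) (hp i).1)
    _ ≤ ∑ i ∈ fuller p x, pm x (Function.update x i (!x i)) *
          (ENNReal.ofReal (α * recoveryPotential U (disc p x)) -
            ENNReal.ofReal (α * recoveryPotential U (disc p (Function.update x i (!x i))))) :=
        sum_le_sum fun i hi => mul_le_mul' (hflip i) (hdrop i hi)
    _ = ∑ z ∈ (fuller p x).image fun i => Function.update x i (!x i), pm x z *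
          (ENNReal.ofReal (α * recoveryPotential U (disc p x)) -
            ENNReal.ofReal (α * recoveryPotential U (disc p z))) := by
        rw [sum_image fun i _ j _ h => update_not_injective x h]
    _ ≤ _ := ENNReal.sum_le_tsum _

lemma div_max_mul_le_nine_mul_min {L : ℝ} (hL : 0 < L) (hU : 0 < U) :
    3 * n / max (2 * U) (n * L) * (3 * U) ≤ 9 * min (U / L) n := by
  have hM : 0 < max (2 * U) (n * L) := lt_max_of_lt_left (by positivity)
  rw [mul_min_of_nonneg _ _ (by norm_num : (0 : ℝ) ≤ 9), div_mul_eq_mul_div]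
  refine le_min ?_ ?_ <;> rw [div_le_iff₀ hM]
  · have : (n * L : ℝ) ≤ max (2 * U) (n * L) := le_max_right _ _
    rw [show 9 * (U / L) * max (2 * U) (n * L) = 9 * U * max (2 * U) (n * L) / L by ring,
      le_div_iff₀ hL]
    nlinarith
  · have : 2 * U ≤ max (2 * U) (n * L : ℝ) := le_max_left _ _
    nlinarith

theorem hitTime_recovery_le (pm : (Fin n → Bool) → (Fin n → Bool) → ℝ≥0∞)
    (hpm : ∀ x, ∑' z, pm x z ≤ 1)
    (hflip : ∀ x i, ENNReal.ofReal (3 * n)⁻¹ ≤ pm x (Function.update x i (!x i)))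
    {L : ℝ} (hL : 0 < L) (hLU : L ≤ U) (hp : ∀ i, L ≤ p i ∧ p i ≤ U)
    {x₀ : Fin n → Bool} (hx₀ : disc p x₀ ≤ 2 * U) :
    hitTime (eaKernel pm fun x z => mkspan p z ≤ mkspan p x) (fun x => disc p x ≤ U) x₀ ≤
      ENNReal.ofReal (9 * min (U / L) n) := by
  have hU : 0 < U := hL.trans_le hLU
  have hp' : ∀ i, 0 ≤ p i ∧ p i ≤ U := fun i => ⟨hL.le.trans (hp i).1, (hp i).2⟩
  set M := max (2 * U) (n * L)
  have hM : 0 < M := lt_max_of_lt_left (by positivity)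
  set α := 3 * n / M
  have hα : 0 ≤ α := by positivity
  set φ : ℝ → ℝ≥0∞ := fun d => ENNReal.ofReal (α * recoveryPotential U d)
  have hφ : Monotone φ := fun a b h =>
    ENNReal.ofReal_le_ofReal (mul_le_mul_of_nonneg_left (recoveryPotential_mono hU.le h) hα)
  have hmk : ∀ x, U < disc p x → 3 * n ≤ 2 * α * mkspan p x := by
    intro x hx
    have hdisc := disc_le_mkspan (fun i => (hp' i).1) x
    have hsum : n * L ≤ ∑ i, p i := by
      simpa using card_nsmul_le_sum univ p L fun i _ => (hp i).1
    have h2 := two_mul_mkspan p x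
    have hMle : M ≤ 2 * mkspan p x := max_le (by linarith) (by linarith)
    calc (3 * n : ℝ) = α * M := (div_mul_cancel₀ _ hM.ne').symm
      _ ≤ α * (2 * mkspan p x) := by gcongr
      _ = 2 * α * mkspan p x := by ring
  simp only [mkspan_le_mkspan_iff]
  calc hitTime _ _ x₀ ≤ φ (disc p x₀) :=
        hitTime_le_of_drift _ _ (fun x => φ (disc p x)) (fun x hx =>
          one_add_tsum_eaKernel_mul_le pm hφ (hpm x) (one_le_tsum_mul_potential_drop pm hU.le hp'
            hα (hflip x) (not_le.mp hx) (hmk x (not_le.mp hx)))) x₀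
    _ ≤ ENNReal.ofReal (α * (3 * U)) :=
        ENNReal.ofReal_le_ofReal (mul_le_mul_of_nonneg_left (recoveryPotential_le hU.le hx₀) hα)
    _ ≤ ENNReal.ofReal (9 * min (U / L) n) :=
        ENNReal.ofReal_le_ofReal (div_max_mul_le_nine_mul_min hL hU)

end Recovery

/-- In the adversary model of dynamic makespan scheduling with processing times
in `[L, U]` and `R = U/L`, if the current solution `x₀` has discrepancy at most `U` (w.r.t. the
old processing times `p₀`) and the adversary changes the processing time of one job, yielding
new processing times `p₁`, then both RLS and the (1+1) EA recover a solution with discrepancy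
at most `U` in expected time `O(min{R, n})`. -/
theorem stmt_14 :
    ∃ c : ℝ, 0 < c ∧ ∃ n₀ : ℕ, ∀ n : ℕ, n₀ ≤ n → ∀ L U : ℝ, 0 < L → L ≤ U →
      ∀ p₀ p₁ : Fin n → ℝ, (∀ i, L ≤ p₀ i ∧ p₀ i ≤ U) → (∀ i, L ≤ p₁ i ∧ p₁ i ≤ U) →
        (Finset.univ.filter fun i => p₁ i ≠ p₀ i).card ≤ 1 →
          ∀ x₀ : Fin n → Bool, disc p₀ x₀ ≤ U →
            (hitTime (eaKernel (pmutRLS n) fun x z => mkspan p₁ z ≤ mkspan p₁ x)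
                (fun x => disc p₁ x ≤ U) x₀ ≤
              ENNReal.ofReal (c * min (U / L) (n : ℝ))) ∧
            (hitTime (eaKernel (pmutEA n) fun x z => mkspan p₁ z ≤ mkspan p₁ x)
                (fun x => disc p₁ x ≤ U) x₀ ≤
              ENNReal.ofReal (c * min (U / L) (n : ℝ))) := by
  refine ⟨9, by norm_num, 0, fun n _ L U hL hLU p₀ p₁ hp₀ hp₁ hcard x₀ hx₀ => ?_⟩
  have hchange : ∀ i, |p₁ i - p₀ i| ≤ U - L := fun i =>
    abs_sub_le_iff.mpr ⟨by linarith [(hp₁ i).2, (hp₀ i).1], by linarith [(hp₀ i).2, (hp₁ i).1]⟩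
  have hx₀' : disc p₁ x₀ ≤ 2 * U := by
    have := (abs_le.mp (abs_disc_sub_disc_le p₀ p₁ x₀)).2
    have := sum_abs_sub_le_of_card_ne_le_one (sub_nonneg.mpr hLU) hchange hcard
    linarith
  exact ⟨hitTime_recovery_le _ tsum_pmutRLS_le_one ofReal_le_pmutRLS_update_not hL hLU hp₁ hx₀',
    hitTime_recovery_le _ (fun x => (tsum_pmutEA x).le) ofReal_le_pmutEA_update_not hL hLU hp₁ hx₀'⟩
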